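/- arXiv:2009.00574 — 7 statements merged into one kernel-verified Lean document; each statement's English description precedes it below -/
import Mathlib

section
/- Let X and Y be Banach spaces, A ⊆ X an open set, W ⊆ X an n-dimensional subspace, and K ⊆ W ∩ A compact. Let F ∈ C¹(A, Y) (Fréchet differentiable with continuous derivative) be such that F restricted to K is injective and F′(x) is injective on W for every x ∈ W ∩ A. Then there exists C > 0 such that ‖x − y‖_X ≤ C ‖F(x) − F(y)‖_Y for all x, y ∈ K. -/
/-!
Near a point `a` of `K`, the map `F` restricted to `W` is a small perturbation of the injective,
hence antilipschitz, linear map `F' a` on the finite-dimensional space `W`, so it is antilipschitz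
near `a`. Away from the diagonal of `K × K`, `‖F x - F y‖` is bounded below by continuity and
injectivity. Compactness of `K × K` glues these local bounds into a single constant.
-/

open Filter Set Topology NNReal

section LocalAntilipschitz

variable {𝕜 : Type*} [NontriviallyNormedField 𝕜]
  {E : Type*} [NormedAddCommGroup E] [NormedSpace 𝕜 E]
  {F : Type*} [NormedAddCommGroup F] [NormedSpace 𝕜 F]

theorem HasStrictFDerivAt.exists_nhds_antilipschitzWith_domRestrict {f : E → F} {f' : E →L[𝕜] F}
    {a : E} (hf : HasStrictFDerivAt f f' a) {N : ℝ≥0} (hN : 0 < N)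
    (hf' : AntilipschitzWith N f') :
    ∃ s ∈ 𝓝 a, ∃ C, AntilipschitzWith C (s.domRestrict f) := by
  obtain ⟨c, hc0, hcN⟩ := exists_between (inv_pos.2 hN)
  obtain ⟨s, hs, hfs⟩ := hf.approximates_deriv_on_nhds (Or.inr hc0)
  exact ⟨s, hs, _, (hf'.domRestrict s).add_sub_lipschitzWith hfs.lipschitz_sub hcN⟩

theorem HasStrictFDerivAt.exists_nhdsWithin_antilipschitzWith_domRestrict [CompleteSpace 𝕜]
    {f : E → F} {f' : E →L[𝕜] F} {W : Submodule 𝕜 E} [FiniteDimensional 𝕜 W] {a : E}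
    (hf : HasStrictFDerivAt f f' a) (ha : a ∈ W) (hf' : InjOn f' W) :
    ∃ U ∈ 𝓝[W] a, ∃ C, AntilipschitzWith C (U.domRestrict f) := by
  have hker : LinearMap.ker (f'.comp W.subtypeL : W →ₗ[𝕜] F) = ⊥ :=
    LinearMap.ker_eq_bot.2 fun v w hvw => Subtype.ext (hf' v.2 w.2 hvw)
  obtain ⟨N, hN, hN'⟩ := LinearMap.exists_antilipschitzWith _ hker
  have hfW : HasStrictFDerivAt (f ∘ W.subtype) (f'.comp W.subtypeL) (⟨a, ha⟩ : W) :=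
    hf.comp _ W.subtypeL.hasStrictFDerivAt
  obtain ⟨s, hs, C, hC⟩ :=
    HasStrictFDerivAt.exists_nhds_antilipschitzWith_domRestrict hfW hN hN'
  refine ⟨(↑) '' s, mem_nhds_subtype_iff_nhdsWithin.1 hs, C, ?_⟩
  rintro ⟨_, v, hv, rfl⟩ ⟨_, w, hw, rfl⟩
  exact hC ⟨v, hv⟩ ⟨w, hw⟩

end LocalAntilipschitz

theorem IsCompact.exists_antilipschitzWith_domRestrict {α β : Type*} [PseudoMetricSpace α]
    [MetricSpace β] {K : Set α} (hK : IsCompact K) {f : α → β} (hf : ContinuousOn f K)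
    (hinj : InjOn f K) (hloc : ∀ a ∈ K, ∃ U ∈ 𝓝[K] a, ∃ C, AntilipschitzWith C (U.domRestrict f)) :
    ∃ C, AntilipschitzWith C (K.domRestrict f) := by
  suffices h : ∃ C : ℝ≥0, ∀ p ∈ K ×ˢ K, dist p.1 p.2 ≤ C * dist (f p.1) (f p.2) by
    obtain ⟨C, hC⟩ := h
    exact ⟨C, .of_le_mul_dist fun x y => hC (x, y) ⟨x.2, y.2⟩⟩
  refine (hK.prod hK).induction_on ⟨0, by simp⟩
    (fun s t hst ⟨C, hC⟩ => ⟨C, fun p hp => hC p (hst hp)⟩)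
    (fun s t ⟨C, hC⟩ ⟨D, hD⟩ => ⟨max C D, ?_⟩) ?_
  · rintro p (hp | hp)
    · exact (hC p hp).trans (by gcongr; exact le_max_left C D)
    · exact (hD p hp).trans (by gcongr; exact le_max_right C D)
  rintro ⟨x, y⟩ ⟨hx, hy⟩
  by_cases hxy : f x = f y
  · obtain rfl : x = y := hinj hx hy hxy
    obtain ⟨U, hU, C, hC⟩ := hloc x hx
    refine ⟨U ×ˢ U, ?_, C, fun p ⟨hp₁, hp₂⟩ => hC.le_mul_dist ⟨p.1, hp₁⟩ ⟨p.2, hp₂⟩⟩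
    rw [nhdsWithin_prod_eq]
    exact prod_mem_prod hU hU
  · set r := dist (f x) (f y)
    have hr : 0 < r := dist_pos.2 hxy
    have hfK : ContinuousOn (fun p : α × α => dist (f p.1) (f p.2)) (K ×ˢ K) :=
      continuous_dist.comp_continuousOn (hf.prodMap hf)
    have hfar : ∀ᶠ p in 𝓝[K ×ˢ K] (x, y), r / 2 < dist (f p.1) (f p.2) :=
      (hfK (x, y) ⟨hx, hy⟩).eventually (lt_mem_nhds (half_lt_self hr))
    have hnear : ∀ᶠ p in 𝓝[K ×ˢ K] (x, y), dist p.1 p.2 < dist x y + 1 :=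
      (continuous_fst.dist continuous_snd).continuousWithinAt.eventually
        (gt_mem_nhds (lt_add_one _))
    refine ⟨_, hfar.and hnear, ⟨2 * (dist x y + 1) / r, by positivity⟩, fun p ⟨hp₁, hp₂⟩ => ?_⟩
    calc dist p.1 p.2 ≤ dist x y + 1 := hp₂.le
      _ = 2 * (dist x y + 1) / r * (r / 2) := by field_simp
      _ ≤ 2 * (dist x y + 1) / r * dist (f p.1) (f p.2) := by gcongr

theorem stmt2_general {X Y : Type*} [NormedAddCommGroup X] [NormedSpace ℝ X]
    [NormedAddCommGroup Y] [NormedSpace ℝ Y]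
    (A : Set X) (hA : IsOpen A) (W : Subspace ℝ X) [FiniteDimensional ℝ W]
    (K : Set X) (hK : IsCompact K) (hKWA : K ⊆ ↑W ∩ A)
    (F : X → Y) (F' : X → X →L[ℝ] Y)
    (hder : ∀ x ∈ A, HasFDerivAt F (F' x) x) (hcont : ContinuousOn F' A)
    (hinjF : Set.InjOn F K)
    (hinjF' : ∀ x ∈ (↑W : Set X) ∩ A, Set.InjOn (F' x) ↑W) :
    ∃ C > 0, ∀ x ∈ K, ∀ y ∈ K, ‖x - y‖ ≤ C * ‖F x - F y‖ := by
  have hloc : ∀ a ∈ K, ∃ U ∈ 𝓝[K] a, ∃ C, AntilipschitzWith C (U.domRestrict F) := by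
    intro a ha
    have hA_nhds : A ∈ 𝓝 a := hA.mem_nhds (hKWA ha).2
    have hstrict : HasStrictFDerivAt F (F' a) a :=
      hasStrictFDerivAt_of_hasFDerivAt_of_continuousAt (eventually_of_mem hA_nhds hder)
        (hcont.continuousAt hA_nhds)
    obtain ⟨U, hU, hUC⟩ := HasStrictFDerivAt.exists_nhdsWithin_antilipschitzWith_domRestrict
      hstrict (hKWA ha).1 (hinjF' a (hKWA ha))
    exact ⟨U, nhdsWithin_mono a (fun x hx => (hKWA hx).1) hU, hUC⟩
  obtain ⟨C, hC⟩ := hK.exists_antilipschitzWith_domRestrict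
    (fun x hx => (hder x (hKWA hx).2).continuousAt.continuousWithinAt) hinjF hloc
  refine ⟨C + 1, by positivity, fun x hx y hy => ?_⟩
  calc ‖x - y‖ ≤ C * ‖F x - F y‖ := by
        simpa [Subtype.dist_eq, dist_eq_norm] using hC.le_mul_dist ⟨x, hx⟩ ⟨y, hy⟩
    _ ≤ (C + 1) * ‖F x - F y‖ := by gcongr; linarith

theorem stmt2 {X Y : Type*} [NormedAddCommGroup X] [NormedSpace ℝ X] [CompleteSpace X]
    [NormedAddCommGroup Y] [NormedSpace ℝ Y] [CompleteSpace Y]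
    (A : Set X) (hA : IsOpen A) (n : ℕ) (W : Subspace ℝ X) [FiniteDimensional ℝ W]
    (hW : Module.finrank ℝ W = n)
    (K : Set X) (hK : IsCompact K) (hKWA : K ⊆ ↑W ∩ A)
    (F : X → Y) (F' : X → X →L[ℝ] Y)
    (hder : ∀ x ∈ A, HasFDerivAt F (F' x) x) (hcont : ContinuousOn F' A)
    (hinjF : Set.InjOn F K)
    (hinjF' : ∀ x ∈ (↑W : Set X) ∩ A, Set.InjOn (F' x) ↑W) :
    ∃ C > 0, ∀ x ∈ K, ∀ y ∈ K, ‖x - y‖ ≤ C * ‖F x - F y‖ :=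
  stmt2_general A hA W K hK hKWA F F' hder hcont hinjF hinjF'
end

section
/- Let Y be a Banach space, A ⊆ ℝⁿ an open set, K ⊆ A compact, and F ∈ C¹(A, Y) such that F is injective and F′(x) ∈ L(ℝⁿ, Y) is injective for every x ∈ A. Then there exists C > 0 such that |x − y| ≤ C ‖F(x) − F(y)‖_Y for all x, y ∈ K. -/
theorem stmt3 {Y : Type*} [NormedAddCommGroup Y] [NormedSpace ℝ Y] [CompleteSpace Y]
    (n : ℕ) (A : Set (EuclideanSpace ℝ (Fin n))) (hA : IsOpen A)
    (K : Set (EuclideanSpace ℝ (Fin n))) (hK : IsCompact K) (hKA : K ⊆ A)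
    (F : EuclideanSpace ℝ (Fin n) → Y) (F' : EuclideanSpace ℝ (Fin n) → EuclideanSpace ℝ (Fin n) →L[ℝ] Y)
    (hder : ∀ x ∈ A, HasFDerivAt F (F' x) x) (hcont : ContinuousOn F' A)
    (hinjF : Set.InjOn F A)
    (hinjF' : ∀ x ∈ A, Function.Injective (F' x)) :
    ∃ C > 0, ∀ x ∈ K, ∀ y ∈ K, ‖x - y‖ ≤ C * ‖F x - F y‖ := by
  rcases K.eq_empty_or_nonempty with rfl | hKne
  · exact ⟨1, one_pos, by simp⟩
  -- Local lower Lipschitz bound near each point of K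
  have key : ∀ x₀ : EuclideanSpace ℝ (Fin n), x₀ ∈ K → ∃ r > 0, ∃ c > (0:ℝ),
      ∀ x ∈ Metric.ball x₀ r, ∀ y ∈ Metric.ball x₀ r, ‖x - y‖ ≤ c * ‖F x - F y‖ := by
    intro x₀ hx₀K
    have hx₀A : x₀ ∈ A := hKA hx₀K
    obtain ⟨k, hk, hanti⟩ := (F' x₀).toLinearMap.exists_antilipschitzWith
      (LinearMap.ker_eq_bot.mpr (hinjF' x₀ hx₀A))
    have hkR : (0:ℝ) < (k:ℝ) := hk
    -- continuity of F' at x₀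
    have hcA : ContinuousAt F' x₀ := hcont.continuousAt (hA.mem_nhds hx₀A)
    have hev : ∀ᶠ z in nhds x₀, ‖F' z - F' x₀‖ ≤ (2 * (k:ℝ))⁻¹ := by
      have : Filter.Tendsto (fun z => ‖F' z - F' x₀‖) (nhds x₀) (nhds ‖F' x₀ - F' x₀‖) :=
        ((hcA.sub continuousAt_const).norm)
      simp only [sub_self, norm_zero] at this
      exact this.eventually_le_const (by positivity)
    obtain ⟨r, hr, hrball⟩ := Metric.eventually_nhds_iff.mp
      (hev.and (hA.eventually_mem hx₀A))
    refine ⟨r, hr, 2 * (k:ℝ), by positivity, ?_⟩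
    intro x hx y hy
    have hball : Convex ℝ (Metric.ball x₀ r) := convex_ball x₀ r
    have hderiv : ∀ z ∈ Metric.ball x₀ r,
        HasFDerivWithinAt (fun w => F w - F' x₀ w) (F' z - F' x₀) (Metric.ball x₀ r) z := by
      intro z hz
      have hzA : z ∈ A := (hrball (by simpa [dist_eq_norm] using hz)).2
      exact ((hder z hzA).sub (F' x₀).hasFDerivAt).hasFDerivWithinAt
    have hbound : ∀ z ∈ Metric.ball x₀ r, ‖F' z - F' x₀‖ ≤ (2 * (k:ℝ))⁻¹ := by
      intro z hz
      exact (hrball (by simpa [dist_eq_norm] using hz)).1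
    have hmv := hball.norm_image_sub_le_of_norm_hasFDerivWithin_le hderiv hbound hy hx
    -- hmv : ‖(F x - F' x₀ x) - (F y - F' x₀ y)‖ ≤ (2k)⁻¹ * ‖x - y‖
    have hlow : (k:ℝ)⁻¹ * ‖x - y‖ ≤ ‖F' x₀ x - F' x₀ y‖ := by
      have h := hanti.le_mul_dist x y
      rw [dist_eq_norm, dist_eq_norm] at h
      rw [inv_mul_le_iff₀ hkR]
      simpa using h
    have hFx : ‖F' x₀ x - F' x₀ y‖ - (2 * (k:ℝ))⁻¹ * ‖x - y‖ ≤ ‖F x - F y‖ := by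
      have h1 : ‖F' x₀ x - F' x₀ y‖ ≤ ‖F x - F y‖ + ‖(F x - F' x₀ x) - (F y - F' x₀ y)‖ := by
        have : F' x₀ x - F' x₀ y = (F x - F y) - ((F x - F' x₀ x) - (F y - F' x₀ y)) := by abel
        rw [this]
        exact norm_sub_le _ _
      linarith [hmv]
    have h2k : (k:ℝ)⁻¹ * ‖x - y‖ - (2 * (k:ℝ))⁻¹ * ‖x - y‖ ≤ ‖F x - F y‖ := by
      linarith [hlow, hFx]
    have heq : (k:ℝ)⁻¹ * ‖x - y‖ - (2 * (k:ℝ))⁻¹ * ‖x - y‖ = (2 * (k:ℝ))⁻¹ * ‖x - y‖ := by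
      field_simp; ring
    rw [heq] at h2k
    calc ‖x - y‖ = (2 * (k:ℝ)) * ((2 * (k:ℝ))⁻¹ * ‖x - y‖) := by field_simp
    _ ≤ (2 * (k:ℝ)) * ‖F x - F y‖ := by
        exact mul_le_mul_of_nonneg_left h2k (by positivity)
  choose! r hr c hc hloc using key
  -- finite subcover
  obtain ⟨t, hcover⟩ := hK.elim_nhds_subcover' (fun x hx => Metric.ball x (r x / 2))
    (fun x hx => Metric.ball_mem_nhds x (by linarith [hr x hx]))
  have htne : t.Nonempty := by
    by_contra h
    rw [Finset.not_nonempty_iff_eq_empty] at h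
    obtain ⟨z, hz⟩ := hKne
    have := hcover hz
    simp [h] at this
  set δ : ℝ := t.inf' htne (fun x => r x.1 / 2) with hδdef
  have hδpos : 0 < δ := by
    rw [hδdef]
    apply Finset.lt_inf'_iff .. |>.mpr
    intro b hb
    linarith [hr b.1 b.2]
  set C₁ : ℝ := t.sup' htne (fun x => c x.1) with hC₁def
  have hC₁pos : 0 < C₁ := by
    obtain ⟨b, hb⟩ := htne
    refine lt_of_lt_of_le (hc b.1 b.2) ?_
    rw [hC₁def]
    exact Finset.le_sup' (fun x => c x.1) hb
  have hnear : ∀ x ∈ K, ∀ y ∈ K, ‖x - y‖ < δ → ‖x - y‖ ≤ C₁ * ‖F x - F y‖ := by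
    intro x hx y hy hxy
    obtain ⟨i, hi, hxi⟩ := Set.mem_iUnion₂.mp (hcover hx)
    have hri : δ ≤ r i.1 / 2 := Finset.inf'_le _ hi
    have hxball : x ∈ Metric.ball i.1 (r i.1) := by
      rw [Metric.mem_ball] at hxi ⊢
      linarith [hr i.1 i.2]
    have hyball : y ∈ Metric.ball i.1 (r i.1) := by
      rw [Metric.mem_ball] at hxi ⊢
      have : dist y x < δ := by rwa [dist_eq_norm, norm_sub_rev]
      calc dist y i.1 ≤ dist y x + dist x i.1 := dist_triangle _ _ _
      _ < δ + r i.1 / 2 := by linarith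
      _ ≤ r i.1 := by linarith
    calc ‖x - y‖ ≤ c i.1 * ‖F x - F y‖ := hloc i.1 i.2 x hxball y hyball
    _ ≤ C₁ * ‖F x - F y‖ := by
        apply mul_le_mul_of_nonneg_right _ (norm_nonneg _)
        rw [hC₁def]
        exact Finset.le_sup' (fun x => c x.1) hi
  -- far case
  have hFc : ContinuousOn F A := fun z hz => (hder z hz).continuousAt.continuousWithinAt
  obtain ⟨M, hM⟩ := Metric.isBounded_iff.mp hK.isBounded
  set S : Set (EuclideanSpace ℝ (Fin n) × EuclideanSpace ℝ (Fin n)) :=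
    (K ×ˢ K) ∩ {p | δ ≤ ‖p.1 - p.2‖} with hSdef
  have hScomp : IsCompact S := by
    apply (hK.prod hK).inter_right
    have : IsClosed {p : EuclideanSpace ℝ (Fin n) × EuclideanSpace ℝ (Fin n) | δ ≤ ‖p.1 - p.2‖} :=
      isClosed_le continuous_const ((continuous_fst.sub continuous_snd).norm)
    exact this
  by_cases hSne : S.Nonempty
  · have hgc : ContinuousOn (fun p : EuclideanSpace ℝ (Fin n) × EuclideanSpace ℝ (Fin n) =>
        ‖F p.1 - F p.2‖) S := by
      apply ContinuousOn.norm
      apply ContinuousOn.sub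
      · exact (hFc.comp continuous_fst.continuousOn (fun p hp => hKA hp.1.1))
      · exact (hFc.comp continuous_snd.continuousOn (fun p hp => hKA hp.1.2))
    obtain ⟨p₀, hp₀S, hp₀min⟩ := hScomp.exists_isMinOn hSne hgc
    set m : ℝ := ‖F p₀.1 - F p₀.2‖ with hmdef
    have hmpos : 0 < m := by
      rw [hmdef, norm_pos_iff]
      intro h
      have hne : p₀.1 ≠ p₀.2 := by
        intro he
        have := hp₀S.2
        rw [Set.mem_setOf_eq, he, sub_self, norm_zero] at this
        linarith
      exact hne (hinjF (hKA hp₀S.1.1) (hKA hp₀S.1.2) (by rwa [sub_eq_zero] at h))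
    refine ⟨max C₁ (M / m), lt_of_lt_of_le hC₁pos (le_max_left _ _), ?_⟩
    intro x hx y hy
    by_cases hd : ‖x - y‖ < δ
    · exact le_trans (hnear x hx y hy hd)
        (mul_le_mul_of_nonneg_right (le_max_left _ _) (norm_nonneg _))
    · push_neg at hd
      have hpS : (x, y) ∈ S := ⟨⟨hx, hy⟩, hd⟩
      have hm : m ≤ ‖F x - F y‖ := hp₀min hpS
      have hMxy : ‖x - y‖ ≤ M := by
        rw [← dist_eq_norm]; exact hM hx hy
      calc ‖x - y‖ ≤ M := hMxy
      _ = (M / m) * m := by field_simp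
      _ ≤ (M / m) * ‖F x - F y‖ := by
          apply mul_le_mul_of_nonneg_left hm
          apply div_nonneg (le_trans (norm_nonneg (x - y)) hMxy) hmpos.le
      _ ≤ max C₁ (M / m) * ‖F x - F y‖ :=
          mul_le_mul_of_nonneg_right (le_max_right _ _) (norm_nonneg _)
  · refine ⟨C₁, hC₁pos, ?_⟩
    intro x hx y hy
    by_cases hd : ‖x - y‖ < δ
    · exact hnear x hx y hy hd
    · push_neg at hd
      exact absurd ⟨(x, y), ⟨⟨hx, hy⟩, hd⟩⟩ hSne
end

section
/- Let g ∈ L∞(ℝ) be the 1-periodic function with g(t) = e^{−1/t} for t ∈ (0,1], and define the bounded linear map F : L¹(ℝ) → L¹(ℝ) by F(u) = g·u. Then F is injective, and for the curve γ(t) = χ_{[t,t+1]} one has ‖F(γ(t)) − F(γ(0))‖_{L¹} = 2∫₀ᵗ e^{−1/s} ds ≤ 2 t e^{−1/t} for t ∈ (0,1). Consequently, for every α ∈ (0,1], the quotient ‖F(γ(t)) − F(γ(0))‖_{L¹}^α / ‖γ(t) − γ(0)‖_{L¹} tends to 0 as t → 0⁺, so no α-Hölder stability estimate holds for F on the set {χ_{[t,t+1]}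 : t ∈ ℝ}. -/
/-!
Since `g6 > 0`, multiplication by it is injective. For `0 ≤ t ≤ 1`, `|γ(t) - γ(0)|` is the
indicator of `[0, t) ∪ (1, t + 1]`, two intervals of length `t`; by periodicity `g6` is
`e^{-1/s}` on both of them, which gives the formula for the numerator, and since
`s ↦ e^{-1/s}` is increasing the integral is at most `t e^{-1/t}`. Finally `e^{-α/t} ≤ t / α`
bounds the Hölder quotient by `(2t)^α / (2α) → 0`, and a vanishing quotient rules out any
estimate `‖γ(s) - γ(t)‖ ≤ C ‖F(γ(s)) - F(γ(t))‖^α`.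
-/

open MeasureTheory Filter

noncomputable def g6 (t : ℝ) : ℝ :=
  if Int.fract t = 0 then Real.exp (-1) else Real.exp (-(1 / Int.fract t))

noncomputable def gamma6 (t : ℝ) : ℝ → ℝ :=
  Set.indicator (Set.Icc t (t + 1)) (fun _ => (1:ℝ))

open Set

theorem abs_mul_indicator_sub_indicator {α : Type*} (f : α → ℝ) (s t : Set α) (x : α) :
    |f x * (s.indicator (fun _ => 1) x - t.indicator (fun _ => 1) x)| =
      (symmDiff s t).indicator (fun x => |f x|) x := by
  by_cases hs : x ∈ s <;> by_cases ht : x ∈ t <;> simp [mem_symmDiff, hs, ht]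

theorem abs_indicator_sub_indicator {α : Type*} (s t : Set α) (x : α) :
    |s.indicator (fun _ => (1:ℝ)) x - t.indicator (fun _ => 1) x| =
      (symmDiff s t).indicator (fun _ => 1) x := by
  simpa using abs_mul_indicator_sub_indicator (fun _ => (1:ℝ)) s t x

theorem disjoint_Ico_Ioc_of_le {α : Type*} [Preorder α] {a b c d : α} (h : b ≤ c) :
    Disjoint (Ico a b) (Ioc c d) :=
  disjoint_left.2 fun _ hx hx' => lt_asymm (hx.2.trans_le h) hx'.1

lemma Icc_add_one_symmDiff_Icc_zero_one {t : ℝ} (ht : t ∈ Icc 0 1) :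
    symmDiff (Icc t (t + 1)) (Icc 0 1) = Ico 0 t ∪ Ioc 1 (t + 1) := by
  ext x
  simp only [mem_symmDiff, mem_Icc, mem_union, mem_Ico, mem_Ioc]
  grind

lemma exp_neg_le_inv {y : ℝ} (hy : 0 < y) : Real.exp (-y) ≤ y⁻¹ := by
  rw [Real.exp_neg]
  exact inv_anti₀ hy (by linarith [Real.add_one_le_exp y])

lemma intervalIntegrable_exp_neg_one_div {t : ℝ} (ht : 0 ≤ t) :
    IntervalIntegrable (fun s => Real.exp (-(1 / s))) volume 0 t := by
  refine (expNegInvGlue.contDiff (n := 0)).continuous.intervalIntegrable 0 t |>.congr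
    fun s hs => ?_
  rw [uIoc_of_le ht] at hs
  simp [expNegInvGlue, not_le.2 hs.1]

lemma integral_exp_neg_one_div_le {t : ℝ} (ht : 0 ≤ t) :
    ∫ s in (0:ℝ)..t, Real.exp (-(1 / s)) ≤ t * Real.exp (-(1 / t)) := by
  calc ∫ s in (0:ℝ)..t, Real.exp (-(1 / s))
      ≤ ∫ _ in (0:ℝ)..t, Real.exp (-(1 / t)) := by
        refine intervalIntegral.integral_mono_on_of_le_Ioo ht
          (intervalIntegrable_exp_neg_one_div ht) intervalIntegrable_const fun s hs => ?_
        gcongr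
        exacts [hs.1, hs.2.le]
    _ = t * Real.exp (-(1 / t)) := by simp

lemma tendsto_rpow_mul_exp_neg_one_div_div {α : ℝ} (hα : 0 < α) :
    Tendsto (fun t : ℝ => (2 * t * Real.exp (-(1 / t))) ^ α / (2 * t))
      (nhdsWithin 0 (Ioi 0)) (nhds 0) := by
  have hbound : Tendsto (fun t : ℝ => (2 * t) ^ α / (2 * α)) (nhdsWithin 0 (Ioi 0)) (nhds 0) := by
    have := (((Real.continuous_rpow_const hα.le).comp (continuous_const_mul 2)).div_const
      (2 * α)).tendsto 0
    simp only [Function.comp_def, mul_zero, Real.zero_rpow hα.ne', zero_div] at this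
    exact this.mono_left nhdsWithin_le_nhds
  refine squeeze_zero' ?_ ?_ hbound
  · filter_upwards [self_mem_nhdsWithin] with t (ht : 0 < t)
    positivity
  · filter_upwards [self_mem_nhdsWithin] with t (ht : 0 < t)
    have hexp : Real.exp (-(1 / t)) ^ α ≤ t / α := by
      rw [← Real.exp_mul, neg_mul, one_div_mul_eq_div, ← inv_div]
      exact (exp_neg_le_inv (by positivity)).trans_eq (inv_inv _)
    calc (2 * t * Real.exp (-(1 / t))) ^ α / (2 * t)
        = (2 * t) ^ α * Real.exp (-(1 / t)) ^ α / (2 * t) := by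
          rw [Real.mul_rpow (by positivity) (Real.exp_pos _).le]
      _ ≤ (2 * t) ^ α * (t / α) / (2 * t) := by gcongr
      _ = (2 * t) ^ α / (2 * α) := by field_simp

lemma exists_const_mul_lt_of_tendsto_div_zero {ι : Type*} {l : Filter ι} [l.NeBot]
    {f g : ι → ℝ} (h : Tendsto (fun i => f i / g i) l (nhds 0)) (hg : ∀ᶠ i in l, 0 < g i)
    {C : ℝ} (hC : 0 < C) : ∃ i, C * f i < g i := by
  obtain ⟨i, hi, hgi⟩ := ((h.eventually (gt_mem_nhds (inv_pos.2 hC))).and hg).exists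
  rw [div_lt_iff₀ hgi] at hi
  exact ⟨i, by simpa [hC.ne'] using mul_lt_mul_of_pos_left hi hC⟩

lemma g6_pos (x : ℝ) : 0 < g6 x := by
  unfold g6; split <;> exact Real.exp_pos _

lemma g6_le_one (x : ℝ) : g6 x ≤ 1 := by
  unfold g6
  split
  · exact Real.exp_le_one_iff.2 (by norm_num)
  · have : 0 < 1 / Int.fract x := one_div_pos.2 ((Int.fract_nonneg x).lt_of_ne' ‹_›)
    exact Real.exp_le_one_iff.2 (by linarith)

lemma measurable_g6 : Measurable g6 :=
  Measurable.ite (measurable_fract (measurableSet_singleton 0)) measurable_const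
    (measurable_const.div measurable_fract).neg.exp

lemma periodic_g6 : Function.Periodic g6 1 := fun x => by
  simp only [g6, Int.fract_add_one]

lemma g6_eq_exp_of_mem_Ioc {x : ℝ} (hx : x ∈ Ioc 0 1) : g6 x = Real.exp (-(1 / x)) := by
  rcases hx.2.lt_or_eq with hx1 | rfl
  · rw [g6, Int.fract_eq_self.2 ⟨hx.1.le, hx1⟩, if_neg hx.1.ne']
  · simp [g6]

lemma integrableOn_g6 {s : Set ℝ} (hs : volume s ≠ ⊤) : IntegrableOn g6 s :=
  Measure.integrableOn_of_bounded hs measurable_g6.aestronglyMeasurable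
    (ae_of_all _ fun x => by rw [Real.norm_of_nonneg (g6_pos x).le]; exact g6_le_one x)

lemma integral_g6_eq {t : ℝ} (ht : t ∈ Icc 0 1) :
    ∫ s in (0:ℝ)..t, g6 s = ∫ s in (0:ℝ)..t, Real.exp (-(1 / s)) :=
  intervalIntegral.integral_congr_ae <| ae_of_all _ fun s hs => by
    rw [uIoc_of_le ht.1] at hs
    exact g6_eq_exp_of_mem_Ioc ⟨hs.1, hs.2.trans ht.2⟩

lemma integral_abs_gamma6_sub_gamma6_zero {t : ℝ} (ht : t ∈ Icc 0 1) :
    ∫ x, |gamma6 t x - gamma6 0 x| = 2 * t := by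
  simp only [gamma6, zero_add, abs_indicator_sub_indicator, Icc_add_one_symmDiff_Icc_zero_one ht]
  rw [integral_indicator_const _ (measurableSet_Ico.union measurableSet_Ioc),
    measureReal_union (disjoint_Ico_Ioc_of_le ht.2) measurableSet_Ioc measure_Ico_lt_top.ne
      measure_Ioc_lt_top.ne,
    Real.volume_real_Ico_of_le ht.1, Real.volume_real_Ioc_of_le (by linarith [ht.1])]
  simp; ring

lemma integral_abs_g6_mul_gamma6_sub_gamma6_zero {t : ℝ} (ht : t ∈ Icc 0 1) :
    ∫ x, |g6 x * (gamma6 t x - gamma6 0 x)| = 2 * ∫ s in (0:ℝ)..t, Real.exp (-(1 / s)) := by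
  have hshift : ∫ x in Ioc 1 (t + 1), g6 x = ∫ x in (0:ℝ)..t, g6 x := by
    have := intervalIntegral.integral_comp_add_right g6 (a := 0) (b := t) 1
    simp only [periodic_g6 _, zero_add] at this
    rw [this, intervalIntegral.integral_of_le (by linarith [ht.1])]
  simp only [gamma6, zero_add, abs_mul_indicator_sub_indicator,
    Icc_add_one_symmDiff_Icc_zero_one ht, abs_of_pos (g6_pos _)]
  rw [integral_indicator (measurableSet_Ico.union measurableSet_Ioc),
    setIntegral_union (disjoint_Ico_Ioc_of_le ht.2) measurableSet_Ioc
      (integrableOn_g6 measure_Ico_lt_top.ne) (integrableOn_g6 measure_Ioc_lt_top.ne),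
    integral_Ico_eq_integral_Ioc, ← intervalIntegral.integral_of_le ht.1, hshift,
    integral_g6_eq ht]
  ring

lemma tendsto_holder_quotient {α : ℝ} (hα : 0 < α) :
    Tendsto (fun t : ℝ =>
        (∫ x : ℝ, |g6 x * (gamma6 t x - gamma6 0 x)|) ^ α /
          (∫ x : ℝ, |gamma6 t x - gamma6 0 x|))
      (nhdsWithin 0 (Ioi 0)) (nhds 0) := by
  refine squeeze_zero' (Eventually.of_forall fun t => by positivity) ?_
    (tendsto_rpow_mul_exp_neg_one_div_div hα)
  filter_upwards [Ioo_mem_nhdsGT one_pos] with t ht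
  rw [integral_abs_gamma6_sub_gamma6_zero (Ioo_subset_Icc_self ht)]
  gcongr ?_ ^ α / _
  · linarith [ht.1]
  · rw [integral_abs_g6_mul_gamma6_sub_gamma6_zero (Ioo_subset_Icc_self ht)]
    linarith [integral_exp_neg_one_div_le ht.1.le]

theorem stmt6 :
    (∀ u : ℝ → ℝ, Integrable u → (∀ᵐ x : ℝ, g6 x * u x = 0) → (∀ᵐ x : ℝ, u x = 0)) ∧
    (∀ t ∈ Set.Ioo (0:ℝ) 1,
      (∫ x : ℝ, |g6 x * (gamma6 t x - gamma6 0 x)|) =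
          2 * ∫ s in (0:ℝ)..t, Real.exp (-(1 / s)) ∧
      (∫ x : ℝ, |g6 x * (gamma6 t x - gamma6 0 x)|) ≤ 2 * t * Real.exp (-(1 / t))) ∧
    (∀ α ∈ Set.Ioc (0:ℝ) 1,
      Tendsto (fun t : ℝ =>
          (∫ x : ℝ, |g6 x * (gamma6 t x - gamma6 0 x)|) ^ α /
            (∫ x : ℝ, |gamma6 t x - gamma6 0 x|))
        (nhdsWithin 0 (Set.Ioi 0)) (nhds 0) ∧
      ¬ ∃ C > (0:ℝ), ∀ s t : ℝ,
          (∫ x : ℝ, |gamma6 s x - gamma6 t x|) ≤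
            C * (∫ x : ℝ, |g6 x * (gamma6 s x - gamma6 t x)|) ^ α) := by
  refine ⟨fun u _ hu => ?_, fun t ht => ?_, fun α hα => ?_⟩
  · filter_upwards [hu] with x hx using (mul_eq_zero.1 hx).resolve_left (g6_pos x).ne'
  · have hN := integral_abs_g6_mul_gamma6_sub_gamma6_zero (Ioo_subset_Icc_self ht)
    refine ⟨hN, ?_⟩
    linarith [integral_exp_neg_one_div_le ht.1.le]
  · have hlim := tendsto_holder_quotient hα.1
    refine ⟨hlim, fun ⟨C, hC, hle⟩ => ?_⟩
    have hD : ∀ᶠ t in nhdsWithin (0:ℝ) (Ioi 0), 0 < ∫ x, |gamma6 t x - gamma6 0 x| := by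
      filter_upwards [Ioo_mem_nhdsGT one_pos] with t ht
      rw [integral_abs_gamma6_sub_gamma6_zero (Ioo_subset_Icc_self ht)]
      linarith [ht.1]
    obtain ⟨t, ht⟩ := exists_const_mul_lt_of_tendsto_div_zero hlim hD hC
    exact (hle t 0).not_gt ht
end

section
/- Let X, Y be Banach spaces, K ⊆ X compact, Q_N : Y → Y bounded linear maps satisfying uniform boundedness on a subspace Ỹ and strong convergence to the identity on Ỹ, and F : K → Y continuous with range in Ỹ satisfying the Lipschitz stability estimate ‖x − y‖_X ≤ C ‖F(x) − F(y)‖_Y on K. Then, given δ > 0, for every N with sup_{ξ∈K} ‖F(ξ) − Q_N F(ξ)‖_Y ≤ δ/(4C) one has ‖x − y‖_X ≤ (2C·diam K/δ) ‖Q_N F(x) − Q_N F(y)‖_Y for all x, y ∈ K with ‖x − y‖_X ≥ δ. -/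
open Filter

theorem stmt8 {X Y : Type*} [NormedAddCommGroup X] [NormedSpace ℝ X] [CompleteSpace X]
    [NormedAddCommGroup Y] [NormedSpace ℝ Y] [CompleteSpace Y]
    (K : Set X) (hK : IsCompact K)
    (Ytil : Subspace ℝ Y) (Q : ℕ → Y →L[ℝ] Y) (D : ℝ) (hD : 0 < D)
    (hQb : ∀ N : ℕ, ∀ y ∈ Ytil, ‖Q N y‖ ≤ D * ‖y‖)
    (hQc : ∀ y ∈ Ytil, Tendsto (fun N : ℕ => ‖y - Q N y‖) atTop (nhds 0))
    (F : X → Y) (hFc : ContinuousOn F K) (hFr : ∀ x ∈ K, F x ∈ Ytil)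
    (C : ℝ) (hC : 0 < C)
    (hstab : ∀ x ∈ K, ∀ y ∈ K, ‖x - y‖ ≤ C * ‖F x - F y‖)
    (δ : ℝ) (hδ : 0 < δ) :
    ∀ N : ℕ, (∀ ξ ∈ K, ‖F ξ - Q N (F ξ)‖ ≤ δ / (4 * C)) →
      ∀ x ∈ K, ∀ y ∈ K, δ ≤ ‖x - y‖ →
        ‖x - y‖ ≤ (2 * C * Metric.diam K / δ) * ‖Q N (F x) - Q N (F y)‖ := by
  intro N hN x hx y hy hxy
  have h1 : ‖x - y‖ ≤ C * ‖F x - F y‖ := hstab x hx y hy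
  have h2 : ‖F x - F y‖ ≤ ‖F x - Q N (F x)‖ + ‖Q N (F x) - Q N (F y)‖ + ‖Q N (F y) - F y‖ := by
    have : F x - F y = (F x - Q N (F x)) + (Q N (F x) - Q N (F y)) + (Q N (F y) - F y) := by abel
    rw [this]
    exact norm_add₃_le
  have h3 : ‖F x - Q N (F x)‖ ≤ δ / (4 * C) := hN x hx
  have h4 : ‖Q N (F y) - F y‖ ≤ δ / (4 * C) := by rw [norm_sub_rev]; exact hN y hy
  have hdiam : ‖x - y‖ ≤ Metric.diam K := by
    rw [← dist_eq_norm]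
    exact Metric.dist_le_diam_of_mem hK.isBounded hx hy
  have hQn : (0:ℝ) ≤ ‖Q N (F x) - Q N (F y)‖ := norm_nonneg _
  have hδd : δ ≤ Metric.diam K := le_trans hxy hdiam
  have haux : C * (δ / (4 * C)) = δ / 4 := by field_simp
  have key : ‖x - y‖ ≤ 2 * C * ‖Q N (F x) - Q N (F y)‖ := by nlinarith
  calc ‖x - y‖ ≤ 2 * C * ‖Q N (F x) - Q N (F y)‖ := key
    _ ≤ (2 * C * Metric.diam K / δ) * ‖Q N (F x) - Q N (F y)‖ := by
        apply mul_le_mul_of_nonneg_right _ hQn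
        rw [le_div_iff₀ hδ]
        nlinarith
end

section
/- Let a₁, a₂ ∈ ℝⁿ and r₁, r₂ > 0 with |r₁ − r₂| ≤ |a₁ − a₂| < r₁ + r₂. Then B(a₁,r₁) △ B(a₂,r₂) is contained in the set-difference of a ball of radius (r₁+r₂+|a₁−a₂|)/2 and a suitably placed ball of radius (r₁+r₂−|a₁−a₂|)/2, and consequently |B(a₁,r₁) △ B(a₂,r₂)| ≤ (ω_n/2ⁿ)[(r₁+r₂+|a₁−a₂|)ⁿ − (r₁+r₂−|a₁−a₂|)ⁿ] ≤ (nω_n/2^{n−1})(r₁+r₂+|a₁−a₂|)^{n−1}|a₁−a₂|. -/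
open Metric MeasureTheory Finset

lemma pow_sub_pow_le_aux {a b : ℝ} (hb : 0 ≤ b) (hab : b ≤ a) (n : ℕ) :
    a ^ n - b ^ n ≤ n * a ^ (n - 1) * (a - b) := by
  have ha : 0 ≤ a := hb.trans hab
  rw [← geom_sum₂_mul]
  have hsum : (∑ i ∈ range n, a ^ i * b ^ (n - 1 - i)) ≤ n * a ^ (n - 1) := by
    calc (∑ i ∈ range n, a ^ i * b ^ (n - 1 - i))
        ≤ ∑ _i ∈ range n, a ^ (n - 1) := by
          apply Finset.sum_le_sum
          intro i hi
          have hin : i + (n - 1 - i) = n - 1 := by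
            have := Finset.mem_range.1 hi; omega
          calc a ^ i * b ^ (n - 1 - i) ≤ a ^ i * a ^ (n - 1 - i) := by gcongr
            _ = a ^ (n - 1) := by rw [← pow_add, hin]
      _ = n * a ^ (n - 1) := by simp [mul_comm]
  exact mul_le_mul_of_nonneg_right hsum (sub_nonneg.2 hab)

theorem stmt13 (n : ℕ) (a₁ a₂ : EuclideanSpace ℝ (Fin n)) (r₁ r₂ : ℝ)
    (h₁ : 0 < r₁) (h₂ : 0 < r₂)
    (hlow : |r₁ - r₂| ≤ ‖a₁ - a₂‖) (hhigh : ‖a₁ - a₂‖ < r₁ + r₂) :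
    (∃ z₁ z₂ : EuclideanSpace ℝ (Fin n),
      symmDiff (ball a₁ r₁) (ball a₂ r₂) ⊆
        ball z₁ ((r₁ + r₂ + ‖a₁ - a₂‖) / 2) \ ball z₂ ((r₁ + r₂ - ‖a₁ - a₂‖) / 2)) ∧
    (volume (symmDiff (ball a₁ r₁) (ball a₂ r₂))).toReal ≤
      ((volume (ball (0 : EuclideanSpace ℝ (Fin n)) 1)).toReal / 2 ^ n) *
        ((r₁ + r₂ + ‖a₁ - a₂‖) ^ n - (r₁ + r₂ - ‖a₁ - a₂‖) ^ n) ∧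
    ((volume (ball (0 : EuclideanSpace ℝ (Fin n)) 1)).toReal / 2 ^ n) *
        ((r₁ + r₂ + ‖a₁ - a₂‖) ^ n - (r₁ + r₂ - ‖a₁ - a₂‖) ^ n) ≤
      ((n : ℝ) * (volume (ball (0 : EuclideanSpace ℝ (Fin n)) 1)).toReal / 2 ^ (n - 1)) *
        (r₁ + r₂ + ‖a₁ - a₂‖) ^ (n - 1) * ‖a₁ - a₂‖ := by
  set d : ℝ := ‖a₁ - a₂‖ with hd
  set c : ℝ := (volume (ball (0 : EuclideanSpace ℝ (Fin n)) 1)).toReal with hc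
  have hc0 : 0 ≤ c := ENNReal.toReal_nonneg
  have hd0 : 0 ≤ d := norm_nonneg _
  rcases eq_or_lt_of_le hd0 with hdz | hdpos
  · -- d = 0 : balls coincide
    have ha : a₁ = a₂ := by
      have h0 : a₁ - a₂ = 0 := by rw [← norm_eq_zero]; exact hdz.symm
      exact sub_eq_zero.1 h0
    have hr : r₁ = r₂ := by
      have : |r₁ - r₂| ≤ 0 := hdz ▸ hlow
      have := abs_nonpos_iff.1 this
      linarith
    have hempty : symmDiff (ball a₁ r₁) (ball a₂ r₂) = ∅ := by
      rw [ha, hr, symmDiff_self]; rfl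
    refine ⟨⟨a₁, a₁, by rw [hempty]; exact Set.empty_subset _⟩, ?_, ?_⟩
    · rw [hempty]
      simp [← hdz]
    · rw [← hdz]
      simp
  · -- d > 0
    have hne : a₁ ≠ a₂ := by
      intro h; rw [h] at hd; simp at hd; rw [hd] at hdpos; exact lt_irrefl _ hdpos
    haveI : Nontrivial (EuclideanSpace ℝ (Fin n)) := nontrivial_of_ne a₁ a₂ hne
    have hn : 1 ≤ n := by
      rcases Nat.eq_zero_or_pos n with h0 | h; swap; · exact h
      exfalso; subst h0
      exact hne (Subsingleton.elim _ _)
    set R : ℝ := (r₁ + r₂ + d) / 2 with hR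
    set ρ : ℝ := (r₁ + r₂ - d) / 2 with hρ
    have habs₁ : r₁ - r₂ ≤ d := (le_abs_self _).trans hlow
    have habs₂ : r₂ - r₁ ≤ d := by
      have := (neg_le_abs (r₁ - r₂)).trans hlow; linarith
    have hρ0 : 0 ≤ ρ := by rw [hρ]; linarith
    have hR0 : 0 ≤ R := by rw [hR]; linarith
    set z₁ : EuclideanSpace ℝ (Fin n) := a₁ + ((R - r₁) / d) • (a₂ - a₁) with hz₁
    set z₂ : EuclideanSpace ℝ (Fin n) := a₁ + ((r₁ - ρ) / d) • (a₂ - a₁) with hz₂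
    have hnorm21 : ‖a₂ - a₁‖ = d := by rw [hd, norm_sub_rev]
    -- distances
    have dist_gen : ∀ t : ℝ, 0 ≤ t → t ≤ 1 →
        dist a₁ (a₁ + t • (a₂ - a₁)) = t * d ∧
        dist a₂ (a₁ + t • (a₂ - a₁)) = (1 - t) * d := by
      intro t ht0 ht1
      constructor
      · rw [dist_eq_norm]
        have : a₁ - (a₁ + t • (a₂ - a₁)) = -(t • (a₂ - a₁)) := by abel
        rw [this, norm_neg, norm_smul, Real.norm_eq_abs, abs_of_nonneg ht0, hnorm21]
      · rw [dist_eq_norm]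
        have : a₂ - (a₁ + t • (a₂ - a₁)) = (1 - t) • (a₂ - a₁) := by
          rw [sub_smul, one_smul]; abel
        rw [this, norm_smul, Real.norm_eq_abs, abs_of_nonneg (by linarith), hnorm21]
    have ht₁0 : 0 ≤ (R - r₁) / d := by
      apply div_nonneg _ hd0; rw [hR]; linarith
    have ht₁1 : (R - r₁) / d ≤ 1 := by
      rw [div_le_one hdpos, hR]; linarith
    have ht₂0 : 0 ≤ (r₁ - ρ) / d := by
      apply div_nonneg _ hd0; rw [hρ]; linarith
    have ht₂1 : (r₁ - ρ) / d ≤ 1 := by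
      rw [div_le_one hdpos, hρ]; linarith
    obtain ⟨hd11, hd21⟩ := dist_gen _ ht₁0 ht₁1
    obtain ⟨hd12, hd22⟩ := dist_gen _ ht₂0 ht₂1
    rw [div_mul_cancel₀ _ (ne_of_gt hdpos)] at hd11 hd12
    have hd11' : dist a₁ z₁ = R - r₁ := hd11
    have hd21' : dist a₂ z₁ = R - r₂ := by
      rw [hd21, sub_mul, one_mul, div_mul_cancel₀ _ (ne_of_gt hdpos)]; rw [hR]; ring
    have hd12' : dist a₁ z₂ = r₁ - ρ := hd12
    have hd22' : dist a₂ z₂ = r₂ - ρ := by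
      rw [hd22, sub_mul, one_mul, div_mul_cancel₀ _ (ne_of_gt hdpos)]; rw [hρ]; ring
    -- inclusions
    have hU : ball a₁ r₁ ∪ ball a₂ r₂ ⊆ ball z₁ R := by
      apply Set.union_subset
      · exact ball_subset_ball' (by rw [hd11']; linarith)
      · exact ball_subset_ball' (by rw [dist_comm] at hd21' ⊢; rw [hd21']; linarith)
    have hI₁ : ball z₂ ρ ⊆ ball a₁ r₁ :=
      ball_subset_ball' (by rw [dist_comm, hd12']; linarith)
    have hI₂ : ball z₂ ρ ⊆ ball a₂ r₂ :=
      ball_subset_ball' (by rw [dist_comm, hd22']; linarith)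
    have hsub : symmDiff (ball a₁ r₁) (ball a₂ r₂) ⊆ ball z₁ R \ ball z₂ ρ := by
      intro x hx
      rw [Set.mem_symmDiff] at hx
      constructor
      · rcases hx with ⟨h, _⟩ | ⟨h, _⟩
        · exact hU (Set.mem_union_left _ h)
        · exact hU (Set.mem_union_right _ h)
      · intro hxρ
        rcases hx with ⟨_, h⟩ | ⟨_, h⟩
        · exact h (hI₂ hxρ)
        · exact h (hI₁ hxρ)
    refine ⟨⟨z₁, z₂, hsub⟩, ?_, ?_⟩
    · -- volume bound
      have hmes : volume (symmDiff (ball a₁ r₁) (ball a₂ r₂)) ≤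
          volume (ball z₁ R \ ball z₂ ρ) := measure_mono hsub
      have hsub2 : ball z₂ ρ ⊆ ball z₁ R := hI₁.trans (fun x hx => hU (Set.mem_union_left _ hx))
      have hball : ∀ (z : EuclideanSpace ℝ (Fin n)) (r : ℝ), 0 ≤ r →
          volume (ball z r) = ENNReal.ofReal (r ^ n) * volume (ball (0 : EuclideanSpace ℝ (Fin n)) 1) := by
        intro z r hr
        rw [Measure.addHaar_ball volume z hr, finrank_euclideanSpace_fin]
      have hdiff : volume (ball z₁ R \ ball z₂ ρ) =
          volume (ball z₁ R) - volume (ball z₂ ρ) :=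
        measure_diff hsub2 measurableSet_ball.nullMeasurableSet measure_ball_lt_top.ne
      have hfin : volume (ball z₁ R) ≠ ⊤ := measure_ball_lt_top.ne
      have hfinρ : volume (ball z₂ ρ) ≠ ⊤ := measure_ball_lt_top.ne
      have htoReal : (volume (ball z₁ R \ ball z₂ ρ)).toReal =
          R ^ n * c - ρ ^ n * c := by
        rw [hdiff, ENNReal.toReal_sub_of_le (measure_mono hsub2) hfin,
          hball z₁ R hR0, hball z₂ ρ hρ0, ENNReal.toReal_mul, ENNReal.toReal_mul,
          ENNReal.toReal_ofReal (pow_nonneg hR0 n), ENNReal.toReal_ofReal (pow_nonneg hρ0 n)]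
      calc (volume (symmDiff (ball a₁ r₁) (ball a₂ r₂))).toReal
          ≤ (volume (ball z₁ R \ ball z₂ ρ)).toReal := by
            apply ENNReal.toReal_mono _ hmes
            exact ((measure_mono (Set.diff_subset)).trans_lt measure_ball_lt_top).ne
        _ = R ^ n * c - ρ ^ n * c := htoReal
        _ = c / 2 ^ n * ((r₁ + r₂ + d) ^ n - (r₁ + r₂ - d) ^ n) := by
            have h2R : r₁ + r₂ + d = 2 * R := by rw [hR]; ring
            have h2ρ : r₁ + r₂ - d = 2 * ρ := by rw [hρ]; ring
            rw [h2R, h2ρ, mul_pow, mul_pow]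
            field_simp
    · -- final algebraic bound
      have hAB : r₁ + r₂ - d ≤ r₁ + r₂ + d := by linarith
      have hB0 : 0 ≤ r₁ + r₂ - d := by linarith
      have key := pow_sub_pow_le_aux hB0 hAB n
      have hsimp : (r₁ + r₂ + d) - (r₁ + r₂ - d) = 2 * d := by ring
      rw [hsimp] at key
      have h2n : (2 : ℝ) ^ n = 2 ^ (n - 1) * 2 := by
        rw [← pow_succ]
        congr 1
        omega
      have h2pos : (0 : ℝ) < 2 ^ (n - 1) := by positivity
      calc c / 2 ^ n * ((r₁ + r₂ + d) ^ n - (r₁ + r₂ - d) ^ n)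
          ≤ c / 2 ^ n * (n * (r₁ + r₂ + d) ^ (n - 1) * (2 * d)) := by
            apply mul_le_mul_of_nonneg_left key (by positivity)
        _ = (n * c / 2 ^ (n - 1)) * (r₁ + r₂ + d) ^ (n - 1) * d := by
            rw [h2n]
            field_simp
end

section
/- For a ∈ ℝⁿ, let G_a : ℝⁿ → ℝ be G_a(z) = e^{−|z−a|²}, viewed as an element of L^p(ℝⁿ) for 1 ≤ p < ∞. Then the map a ↦ G_a from ℝⁿ to L^p(ℝⁿ) is Fréchet differentiable at every a, with derivative h ↦ (z ↦ 2 e^{−|z−a|²} ⟨z−a, h⟩), and this derivative is an injective linear map from ℝⁿ to L^p(ℝⁿ) for every a ∈ ℝⁿ. -/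
/-!
Along the segment `t ↦ a + t • h` the Gaussian `z ↦ exp (-‖z - a - t • h‖²)` has second
`t`-derivative bounded by `6 e^{1/2} ‖h‖² exp (-‖z - a‖² / 4)` when `‖h‖ ≤ 1`, so the first-order
Taylor remainder is pointwise `O(‖h‖²)` times a fixed function of `L^p`, and its `L^p` norm is
`O(‖h‖²)`. The derivative `z ↦ 2 exp (-‖z - a‖²) ⟪z - a, h⟫` is continuous, so if it vanishes
almost everywhere it vanishes at `z = a + h`, where it equals `2 exp (-‖h‖²) ‖h‖²`.
-/

open MeasureTheory Filter Set Real

section RealCurves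

variable {E : Type*} [NormedAddCommGroup E] [NormedSpace ℝ E]

theorem hasDerivAt_sub_smul (w h : E) (t : ℝ) : HasDerivAt (fun s : ℝ => w - s • h) (-h) t := by
  simpa using ((hasDerivAt_id t).smul_const h).const_sub w

theorem norm_sub_sub_deriv_le_of_norm_deriv2_le {g g' g'' : ℝ → E} {M : ℝ}
    (hg : ∀ t ∈ Icc (0 : ℝ) 1, HasDerivWithinAt g (g' t) (Icc 0 1) t)
    (hg' : ∀ t ∈ Icc (0 : ℝ) 1, HasDerivWithinAt g' (g'' t) (Icc 0 1) t)
    (hM : ∀ t ∈ Icc (0 : ℝ) 1, ‖g'' t‖ ≤ M) :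
    ‖g 1 - g 0 - g' 0‖ ≤ M := by
  have h0 : (0 : ℝ) ∈ Icc (0 : ℝ) 1 := left_mem_Icc.2 zero_le_one
  have h1 : (1 : ℝ) ∈ Icc (0 : ℝ) 1 := right_mem_Icc.2 zero_le_one
  have hM0 : 0 ≤ M := (norm_nonneg _).trans (hM 0 h0)
  have hderiv : ∀ t ∈ Icc (0 : ℝ) 1, ‖g' t - g' 0‖ ≤ M := fun t ht => by
    calc ‖g' t - g' 0‖ ≤ M * ‖t - 0‖ :=
          (convex_Icc 0 1).norm_image_sub_le_of_norm_hasDerivWithin_le hg' hM h0 ht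
      _ ≤ M * 1 := by
          gcongr
          rw [sub_zero, Real.norm_eq_abs, abs_of_nonneg ht.1]
          exact ht.2
      _ = M := mul_one M
  have hlin : ∀ t ∈ Icc (0 : ℝ) 1,
      HasDerivWithinAt (fun s => g s - s • g' 0) (g' t - g' 0) (Icc 0 1) t := fun t ht =>
    ((hg t ht).sub ((hasDerivWithinAt_id t _).smul_const (g' 0))).congr_deriv (by simp)
  have := (convex_Icc 0 1).norm_image_sub_le_of_norm_hasDerivWithin_le hlin hderiv h0 h1
  simp only [one_smul, zero_smul, sub_zero, norm_one, mul_one] at this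
  rwa [sub_right_comm] at this

end RealCurves

theorem two_add_four_mul_le_six_mul_exp_half {s : ℝ} (hs : 0 ≤ s) :
    2 + 4 * s ≤ 6 * exp (s / 2) := by
  have hquarter : s / 4 + 1 ≤ exp (s / 4) := add_one_le_exp _
  have hsq : exp (s / 4) * exp (s / 4) = exp (s / 2) := by rw [← exp_add]; ring_nf
  nlinarith [exp_pos (s / 4), sq_nonneg (s - 4)]

theorem exp_neg_sq_div_two_le {u r : ℝ} (hr : 0 ≤ r) (hru : r ≤ u + 1) :
    exp (-u ^ 2 / 2) ≤ exp (1 / 2) * exp (-r ^ 2 / 4) := by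
  rw [← exp_add, exp_le_exp]
  nlinarith [sq_nonneg (u - 1)]

theorem integral_rpow_abs_rpow_le_mul {X : Type*} [MeasurableSpace X] {μ : Measure X}
    {p c : ℝ} (hp : 0 < p) (hc : 0 ≤ c) {f g : X → ℝ} (hg0 : ∀ x, 0 ≤ g x)
    (hfg : ∀ x, |f x| ≤ c * g x) (hg : Integrable (fun x => g x ^ p) μ) :
    (∫ x, |f x| ^ p ∂μ) ^ (1 / p) ≤ c * (∫ x, g x ^ p ∂μ) ^ (1 / p) := by
  have hpow : ∀ x, |f x| ^ p ≤ c ^ p * g x ^ p := fun x => by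
    rw [← mul_rpow hc (hg0 x)]
    exact rpow_le_rpow (abs_nonneg _) (hfg x) hp.le
  calc (∫ x, |f x| ^ p ∂μ) ^ (1 / p) ≤ (c ^ p * ∫ x, g x ^ p ∂μ) ^ (1 / p) := by
        rw [← integral_const_mul]
        refine rpow_le_rpow (integral_nonneg fun x => by positivity) ?_ (by positivity)
        exact integral_mono_of_nonneg (Eventually.of_forall fun x => by positivity)
          (hg.const_mul _) (Eventually.of_forall hpow)
    _ = c * (∫ x, g x ^ p ∂μ) ^ (1 / p) := by
        rw [mul_rpow (by positivity) (integral_nonneg fun x => rpow_nonneg (hg0 x) p),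
          ← rpow_mul hc, mul_one_div_cancel hp.ne', rpow_one]

section Gaussian

variable {V : Type*} [NormedAddCommGroup V] [InnerProductSpace ℝ V]

theorem hasDerivAt_exp_neg_norm_sub_smul_sq (w h : V) (t : ℝ) :
    HasDerivAt (fun s : ℝ => exp (-‖w - s • h‖ ^ 2))
      (2 * exp (-‖w - t • h‖ ^ 2) * inner ℝ (w - t • h) h) t := by
  exact (hasDerivAt_sub_smul w h t).norm_sq.neg.exp.congr_deriv
    (by rw [Pi.neg_apply, inner_neg_right]; ring)

theorem hasDerivAt_two_mul_exp_neg_norm_sub_smul_sq_mul_inner (w h : V) (t : ℝ) :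
    HasDerivAt (fun s : ℝ => 2 * exp (-‖w - s • h‖ ^ 2) * inner ℝ (w - s • h) h)
      (2 * exp (-‖w - t • h‖ ^ 2) * (2 * inner ℝ (w - t • h) h ^ 2 - ‖h‖ ^ 2)) t := by
  exact (((hasDerivAt_exp_neg_norm_sub_smul_sq w h t).const_mul 2).mul
    ((hasDerivAt_sub_smul w h t).inner ℝ (hasDerivAt_const t h))).congr_deriv
    (by rw [inner_zero_right, inner_neg_left, real_inner_self_eq_norm_sq]; ring)

theorem abs_two_mul_exp_neg_norm_sq_mul_le (u h : V) :
    |2 * exp (-‖u‖ ^ 2) * (2 * inner ℝ u h ^ 2 - ‖h‖ ^ 2)| ≤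
      6 * exp (-‖u‖ ^ 2 / 2) * ‖h‖ ^ 2 := by
  have hcs : inner ℝ u h ^ 2 ≤ ‖u‖ ^ 2 * ‖h‖ ^ 2 := by
    simpa [mul_pow, sq_abs] using pow_le_pow_left₀ (abs_nonneg _) (abs_real_inner_le_norm u h) 2
  have hfactor : |2 * inner ℝ u h ^ 2 - ‖h‖ ^ 2| ≤ (2 + 4 * ‖u‖ ^ 2) / 2 * ‖h‖ ^ 2 := by
    rw [abs_le]; constructor <;> nlinarith [sq_nonneg (inner ℝ u h), sq_nonneg ‖h‖]
  have hexp : exp (-‖u‖ ^ 2) * exp (‖u‖ ^ 2 / 2) = exp (-‖u‖ ^ 2 / 2) := by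
    rw [← exp_add]; ring_nf
  calc |2 * exp (-‖u‖ ^ 2) * (2 * inner ℝ u h ^ 2 - ‖h‖ ^ 2)|
      = 2 * exp (-‖u‖ ^ 2) * |2 * inner ℝ u h ^ 2 - ‖h‖ ^ 2| := by
        rw [abs_mul, abs_of_pos (by positivity)]
    _ ≤ exp (-‖u‖ ^ 2) * (2 + 4 * ‖u‖ ^ 2) * ‖h‖ ^ 2 := by
        have := mul_le_mul_of_nonneg_left hfactor (by positivity : 0 ≤ 2 * exp (-‖u‖ ^ 2))
        linarith
    _ ≤ exp (-‖u‖ ^ 2) * (6 * exp (‖u‖ ^ 2 / 2)) * ‖h‖ ^ 2 := by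
        gcongr; exact two_add_four_mul_le_six_mul_exp_half (sq_nonneg _)
    _ = 6 * exp (-‖u‖ ^ 2 / 2) * ‖h‖ ^ 2 := by rw [← hexp]; ring

theorem abs_exp_neg_norm_sub_sq_sub_taylor_le (w h : V) (hh : ‖h‖ ≤ 1) :
    |exp (-‖w - h‖ ^ 2) - exp (-‖w‖ ^ 2) - 2 * exp (-‖w‖ ^ 2) * inner ℝ w h| ≤
      6 * exp (1 / 2) * ‖h‖ ^ 2 * exp (-‖w‖ ^ 2 / 4) := by
  have hbound : ∀ t ∈ Icc (0 : ℝ) 1,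
      ‖2 * exp (-‖w - t • h‖ ^ 2) * (2 * inner ℝ (w - t • h) h ^ 2 - ‖h‖ ^ 2)‖ ≤
        6 * exp (1 / 2) * ‖h‖ ^ 2 * exp (-‖w‖ ^ 2 / 4) := fun t ht => by
    have hclose : ‖w‖ ≤ ‖w - t • h‖ + 1 := by
      have : ‖t • h‖ ≤ 1 := by
        rw [norm_smul, Real.norm_eq_abs, abs_of_nonneg ht.1]
        exact mul_le_one₀ ht.2 (norm_nonneg h) hh
      linarith [norm_le_norm_sub_add w (t • h)]
    calc _ ≤ 6 * exp (-‖w - t • h‖ ^ 2 / 2) * ‖h‖ ^ 2 :=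
          abs_two_mul_exp_neg_norm_sq_mul_le _ _
      _ ≤ 6 * (exp (1 / 2) * exp (-‖w‖ ^ 2 / 4)) * ‖h‖ ^ 2 := by
          gcongr; exact exp_neg_sq_div_two_le (norm_nonneg w) hclose
      _ = _ := by ring
  simpa using norm_sub_sub_deriv_le_of_norm_deriv2_le
    (fun t _ => (hasDerivAt_exp_neg_norm_sub_smul_sq w h t).hasDerivWithinAt)
    (fun t _ => (hasDerivAt_two_mul_exp_neg_norm_sub_smul_sq_mul_inner w h t).hasDerivWithinAt)
    hbound

theorem integral_rpow_abs_gaussian_taylor_le [MeasurableSpace V] {μ : Measure V}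
    {p : ℝ} (hp : 0 < p) (a h : V) (hh : ‖h‖ ≤ 1)
    (hint : Integrable (fun z => exp (-‖z - a‖ ^ 2 / 4) ^ p) μ) :
    (∫ z, |exp (-‖z - (a + h)‖ ^ 2) - exp (-‖z - a‖ ^ 2) -
        2 * exp (-‖z - a‖ ^ 2) * inner ℝ (z - a) h| ^ p ∂μ) ^ (1 / p) ≤
      6 * exp (1 / 2) * ‖h‖ ^ 2 * (∫ z, exp (-‖z - a‖ ^ 2 / 4) ^ p ∂μ) ^ (1 / p) := by
  refine integral_rpow_abs_rpow_le_mul hp (by positivity) (fun z => (exp_pos _).le)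
    (fun z => ?_) hint
  rw [show z - (a + h) = z - a - h by abel]
  exact abs_exp_neg_norm_sub_sq_sub_taylor_le (z - a) h hh

theorem eq_zero_of_ae_two_mul_exp_neg_norm_sub_sq_mul_inner_eq_zero [MeasurableSpace V]
    {μ : Measure V} [μ.IsOpenPosMeasure] (a h : V)
    (hae : ∀ᵐ z ∂μ, 2 * exp (-‖z - a‖ ^ 2) * inner ℝ (z - a) h = 0) : h = 0 := by
  have hcont : Continuous fun z : V => 2 * exp (-‖z - a‖ ^ 2) * inner ℝ (z - a) h := by
    fun_prop
  have hzero := congrFun ((hcont.ae_eq_iff_eq μ continuous_const).1 hae) (a + h)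
  simp only [add_sub_cancel_left, real_inner_self_eq_norm_sq] at hzero
  simpa [(exp_pos _).ne'] using hzero

end Gaussian

theorem integrable_exp_neg_mul_norm_sub_sq {V : Type*} [NormedAddCommGroup V]
    [InnerProductSpace ℝ V] [FiniteDimensional ℝ V] [MeasurableSpace V] [BorelSpace V]
    {b : ℝ} (hb : 0 < b) (a : V) :
    Integrable (fun z : V => exp (-b * ‖z - a‖ ^ 2)) := by
  have h0 : Integrable (fun z : V => exp (-b * ‖z‖ ^ 2)) := by
    refine (GaussianFourier.integrable_cexp_neg_mul_sq_norm_add (V := V) (b := (b : ℂ))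
      (by simpa using hb) 0 0).norm.congr (Eventually.of_forall fun z => ?_)
    simp only [zero_mul, add_zero, Complex.norm_exp]
    norm_cast
  exact h0.comp_sub_right a

theorem stmt16 (n : ℕ) (p : ℝ) (hp : 1 ≤ p) (a : EuclideanSpace ℝ (Fin n)) :
    Tendsto (fun h : EuclideanSpace ℝ (Fin n) =>
        (∫ z : EuclideanSpace ℝ (Fin n),
          |Real.exp (-‖z - (a + h)‖ ^ 2) - Real.exp (-‖z - a‖ ^ 2) -
            2 * Real.exp (-‖z - a‖ ^ 2) * (inner ℝ (z - a) h : ℝ)| ^ p) ^ (1 / p) / ‖h‖)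
      (nhdsWithin 0 {0}ᶜ) (nhds 0) ∧
    ∀ h : EuclideanSpace ℝ (Fin n),
      (∀ᵐ z : EuclideanSpace ℝ (Fin n),
        2 * Real.exp (-‖z - a‖ ^ 2) * (inner ℝ (z - a) h : ℝ) = 0) → h = 0 := by
  have hp0 : 0 < p := one_pos.trans_le hp
  have hint : Integrable (fun z : EuclideanSpace ℝ (Fin n) => exp (-‖z - a‖ ^ 2 / 4) ^ p) := by
    simp_rw [← exp_mul]
    convert integrable_exp_neg_mul_norm_sub_sq (by positivity : 0 < p / 4) a using 3
    ring
  set C := 6 * exp (1 / 2) * (∫ z, exp (-‖z - a‖ ^ 2 / 4) ^ p) ^ (1 / p)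
  refine ⟨?_, fun h hae => eq_zero_of_ae_two_mul_exp_neg_norm_sub_sq_mul_inner_eq_zero a h hae⟩
  have hC : Tendsto (fun h : EuclideanSpace ℝ (Fin n) => C * ‖h‖)
      (nhdsWithin 0 {0}ᶜ) (nhds 0) := by
    simpa using (tendsto_norm_zero.const_mul C).mono_left nhdsWithin_le_nhds
  refine squeeze_zero' (Eventually.of_forall fun h => by positivity) ?_ hC
  filter_upwards [nhdsWithin_le_nhds (Metric.closedBall_mem_nhds 0 one_pos)] with h hh
  rw [mem_closedBall_zero_iff] at hh
  refine div_le_of_le_mul₀ (norm_nonneg h) (by positivity) ?_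
  calc _ ≤ 6 * exp (1 / 2) * ‖h‖ ^ 2 * (∫ z, exp (-‖z - a‖ ^ 2 / 4) ^ p) ^ (1 / p) :=
        integral_rpow_abs_gaussian_taylor_le hp0 a h hh hint
    _ = C * ‖h‖ * ‖h‖ := by ring
end

section
/- Let μ > 0 and let T_v, T_{v'} ⊆ ℝⁿ be n-simplexes with vertex matrices v = (v₀,…,v_n) and v' = (v₀',…,v_n') satisfying |v_i − v_j| < μ for all i, j, and with δ := max_i |v_i − v_i'| ≤ μ. Then the Lebesgue measure of the symmetric difference satisfies |T_{v'} △ T_v| ≤ 3ⁿ(n+1)μ^{n−1}δ. In particular, the map v ↦ χ_{T_v} ∈ L¹(ℝⁿ) is locally Lipschitz with constant 3ⁿ(n+1)μ^{n−1} with respect to the norm ‖v‖ = max_i |v_i|. -/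
/-!
Every point of `T_{v'} △ T_v` lies within `δ` of a facet of `T_v`. A point of `T_{v'}` is within
`δ` of `T_v`, because `T_v + B_δ` is convex and contains every `v'_i`; conversely a point of `T_v`
whose whole `δ`-ball lies in `T_v` is in `T_{v'}`, since a hyperplane separating it from `T_{v'}`
would be pushed by at most `δ` when the vertices move. In both cases we get a point inside and a
point outside `T_v` at distance `≤ δ`, and the segment joining them crosses a facet.

In an orthonormal frame whose first vector is normal to a facet, the `δ`-neighbourhood of that
facet lies in a box with sides `2δ` and `μ + 2δ`, so it has measure `≤ (μ + 2δ)^(n-1) 2δ`, and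
`μ + 2δ ≤ 3μ`. Summing over the `n + 1` facets gives the bound.
-/

open MeasureTheory Metric Set AffineMap RealInnerProductSpace Module
open scoped Pointwise

section Facets

variable {V : Type*} [AddCommGroup V] [Module ℝ V] {n : ℕ}

theorem AffineBasis.mem_convexHull_facet (b : AffineBasis (Fin (n + 1)) ℝ V) {z : V}
    (hz : ∀ j, 0 ≤ b.coord j z) {i : Fin (n + 1)} (hzi : b.coord i z = 0) :
    z ∈ convexHull ℝ (range (b ∘ i.succAbove)) := by
  set c : Fin (n + 1) → ℝ := fun j => b.coord j z
  have hsum : ∑ k, (c ∘ i.succAbove) k = 1 := by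
    simpa [Fin.sum_univ_succAbove c i, c, hzi] using b.sum_coord_apply_eq_one z
  have hrepr : z = Finset.univ.affineCombination ℝ (b ∘ i.succAbove) (c ∘ i.succAbove) := by
    rw [Finset.univ.affineCombination_eq_linear_combination _ _ hsum]
    conv_lhs => rw [← b.affineCombination_coord_eq_self z,
      Finset.univ.affineCombination_eq_linear_combination _ _ (b.sum_coord_apply_eq_one z),
      Fin.sum_univ_succAbove _ i]
    simp [hzi, c]
  rw [hrepr]
  exact affineCombination_mem_convexHull (fun k _ => hz _) hsum

theorem AffineBasis.exists_mem_segment_mem_convexHull_facet (b : AffineBasis (Fin (n + 1)) ℝ V)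
    {p q : V} (hp : p ∈ convexHull ℝ (range b)) (hq : q ∉ convexHull ℝ (range b)) :
    ∃ i : Fin (n + 1), ∃ z ∈ segment ℝ p q, z ∈ convexHull ℝ (range (b ∘ i.succAbove)) := by
  simp only [b.convexHull_eq_nonneg_coord, mem_ofPred_eq, not_forall, not_le] at hp hq
  let g : ℝ → ℝ := fun t => Finset.univ.inf' Finset.univ_nonempty fun i => b.coord i (lineMap p q t)
  have hg : Continuous g := Continuous.finset_inf'_apply _ fun i _ => by
    simp_rw [AffineMap.apply_lineMap]; fun_prop
  have hg0 : 0 ≤ g 0 := Finset.le_inf' _ _ fun i _ => by simpa using hp i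
  have hg1 : g 1 < 0 := by
    obtain ⟨i, hi⟩ := hq
    exact (Finset.inf'_le _ (Finset.mem_univ i)).trans_lt (by simpa using hi)
  obtain ⟨t, ht, hgt⟩ := intermediate_value_Icc' zero_le_one hg.continuousOn ⟨hg1.le, hg0⟩
  obtain ⟨i, -, hi⟩ := Finset.exists_mem_eq_inf' Finset.univ_nonempty
    fun i => b.coord i (lineMap p q t)
  refine ⟨i, lineMap p q t, segment_eq_image_lineMap ℝ p q ▸ mem_image_of_mem _ ht,
    b.mem_convexHull_facet (fun j => ?_) (hi.symm.trans hgt)⟩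
  exact hgt.symm.le.trans (Finset.inf'_le _ (Finset.mem_univ j))

end Facets

variable {E : Type*} [NormedAddCommGroup E] [InnerProductSpace ℝ E]

section Perturbation

variable {ι : Type*} {v v' : ι → E} {δ : ℝ}

theorem convexHull_range_subset_add_closedBall (hδ : ∀ i, ‖v i - v' i‖ ≤ δ) :
    convexHull ℝ (range v') ⊆ convexHull ℝ (range v) + closedBall (0 : E) δ := by
  refine convexHull_min (range_subset_iff.2 fun i => ?_)
    ((convex_convexHull ℝ _).add (convex_closedBall 0 δ))
  refine ⟨v i, subset_convexHull ℝ _ (mem_range_self i), v' i - v i, ?_, add_sub_cancel _ _⟩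
  rw [mem_closedBall_zero_iff, norm_sub_rev]
  exact hδ i

theorem mem_convexHull_of_closedBall_subset [CompleteSpace E] [Finite ι] (hδ0 : 0 ≤ δ)
    (hδ : ∀ i, ‖v i - v' i‖ ≤ δ) {x : E} (hx : closedBall x δ ⊆ convexHull ℝ (range v)) :
    x ∈ convexHull ℝ (range v') := by
  by_contra hx'
  obtain ⟨f, s, hfs, hsx⟩ := geometric_hahn_banach_closed_point (convex_convexHull ℝ _)
    ((finite_range v').isCompact_convexHull ℝ).isClosed hx'
  set a : E := (InnerProductSpace.toDual ℝ E).symm f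
  have hfa : ∀ y, f y = ⟪a, y⟫ := fun _ => InnerProductSpace.toDual_symm_apply.symm
  -- The hull of `v` stays below `s + δ ‖a‖`, while the ball reaches `f x + δ ‖a‖` in direction `a`.
  have hT : convexHull ℝ (range v) ⊆ {z | ⟪a, z⟫ ≤ s + δ * ‖a‖} := by
    refine convexHull_min (range_subset_iff.2 fun i => ?_)
      (convex_halfSpace_le (innerₛₗ ℝ a).isLinear _)
    have hv'i := hfa _ ▸ hfs _ (subset_convexHull ℝ _ (mem_range_self i))
    have hi : ⟪a, v i - v' i⟫ ≤ ‖a‖ * δ :=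
      (real_inner_le_norm _ _).trans (mul_le_mul_of_nonneg_left (hδ i) (norm_nonneg a))
    rw [inner_sub_right] at hi
    simp only [mem_ofPred_eq]
    linarith
  set y := x + (δ * ‖a‖⁻¹) • a
  have hy : ⟪a, y⟫ = ⟪a, x⟫ + δ * ‖a‖ := by
    rcases eq_or_ne a 0 with ha | ha
    · simp [y, ha]
    · simp only [y, inner_add_right, inner_smul_right, real_inner_self_eq_norm_sq]
      field_simp
  have hyx : dist y x ≤ δ := by
    rcases eq_or_ne a 0 with ha | ha
    · simpa [y, ha] using hδ0
    · simp [y, dist_eq_norm, norm_smul, abs_of_nonneg hδ0, ha]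
  have := hT (hx hyx)
  simp only [mem_ofPred_eq] at this
  linarith [hfa x]

theorem AffineBasis.symmDiff_convexHull_subset_iUnion_cthickening [CompleteSpace E] {n : ℕ}
    (b : AffineBasis (Fin (n + 1)) ℝ E) (v' : Fin (n + 1) → E) {δ : ℝ} (hδ0 : 0 ≤ δ)
    (hδ : ∀ i, ‖b i - v' i‖ ≤ δ) :
    symmDiff (convexHull ℝ (range v')) (convexHull ℝ (range b)) ⊆
      ⋃ i : Fin (n + 1), cthickening δ (convexHull ℝ (range (b ∘ i.succAbove))) := by
  rintro x (⟨hx', hx⟩ | ⟨hx, hx'⟩)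
  · obtain ⟨y, hy, u, hu, rfl⟩ := convexHull_range_subset_add_closedBall hδ hx'
    obtain ⟨i, z, hzyx, hz⟩ := b.exists_mem_segment_mem_convexHull_facet hy hx
    refine mem_iUnion.2 ⟨i, mem_cthickening_of_dist_le _ z _ _ hz ?_⟩
    have := dist_add_dist_of_mem_segment hzyx
    have hyu : dist y (y + u) ≤ δ := by simpa [dist_eq_norm] using hu
    linarith [dist_nonneg (x := y) (y := z), dist_comm z (y + u)]
  · obtain ⟨y, hy, hyT⟩ := not_subset.1
      fun h => hx' (mem_convexHull_of_closedBall_subset hδ0 hδ h)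
    obtain ⟨i, z, hzxy, hz⟩ := b.exists_mem_segment_mem_convexHull_facet hx hyT
    refine mem_iUnion.2 ⟨i, mem_cthickening_of_dist_le _ z _ _ hz ?_⟩
    have := dist_add_dist_of_mem_segment hzxy
    linarith [dist_nonneg (x := z) (y := y), dist_comm y x, mem_closedBall.1 hy]

end Perturbation

section Width

theorem inner_mem_Icc_of_mem_convexHull {ι : Type*} [Finite ι] [Nonempty ι] {w : ι → E}
    {e : E} {L : ℝ} (hw : ∀ j k, ⟪e, w j - w k⟫ ≤ L) {z : E}
    (hz : z ∈ convexHull ℝ (range w)) : ⟪e, z⟫ ∈ Icc (⨅ j, ⟪e, w j⟫) ((⨅ j, ⟪e, w j⟫) + L) := by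
  refine convexHull_min (range_subset_iff.2 fun j => ?_)
    ((convex_Icc _ _).linear_preimage (innerₛₗ ℝ e)) hz
  obtain ⟨k, hk⟩ := exists_eq_ciInf_of_finite (f := fun j => ⟪e, w j⟫)
  have hjk := hw j k
  rw [inner_sub_right] at hjk
  show ⟪e, w j⟫ ∈ Icc _ _
  exact ⟨ciInf_le (Finite.bddBelow_range _) j, by rw [← hk]; linarith⟩

theorem inner_mem_Icc_of_mem_cthickening {s : Set E} (hs : IsCompact s) {e : E} (he : ‖e‖ ≤ 1)
    {a c δ : ℝ} (hδ : 0 ≤ δ) (h : ∀ z ∈ s, ⟪e, z⟫ ∈ Icc a c) {x : E}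
    (hx : x ∈ cthickening δ s) : ⟪e, x⟫ ∈ Icc (a - δ) (c + δ) := by
  rw [hs.cthickening_eq_biUnion_closedBall hδ, mem_iUnion₂] at hx
  obtain ⟨z, hz, hxz⟩ := hx
  have hclose : |⟪e, x⟫ - ⟪e, z⟫| ≤ δ := by
    rw [← inner_sub_right]
    calc |⟪e, x - z⟫| ≤ ‖e‖ * ‖x - z‖ := abs_real_inner_le_norm _ _
      _ ≤ δ := (mul_le_of_le_one_left (norm_nonneg _) he).trans (mem_closedBall_iff_norm.1 hxz)
  obtain ⟨hza, hzc⟩ := h z hz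
  constructor <;> linarith [abs_le.1 hclose]

theorem exists_orthonormalBasis_zero_mem_orthogonal [FiniteDimensional ℝ E] {d : ℕ}
    (hE : finrank ℝ E = d + 1) {K : Submodule ℝ E} (hK : K ≠ ⊤) :
    ∃ b : OrthonormalBasis (Fin (d + 1)) ℝ E, b 0 ∈ Kᗮ := by
  obtain ⟨u, hu, hu0⟩ := Submodule.exists_mem_ne_zero_of_ne_bot
    (Submodule.orthogonal_eq_bot_iff.not.2 hK)
  have horth : Orthonormal ℝ (({0} : Set (Fin (d + 1))).domRestrict fun _ => ‖u‖⁻¹ • u) :=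
    ⟨fun _ => norm_smul_inv_norm hu0, fun i j hij => absurd (Subsingleton.elim i j) hij⟩
  obtain ⟨b, hb⟩ := horth.exists_orthonormalBasis_extension_of_card_eq (by simpa using hE)
  exact ⟨b, hb 0 rfl ▸ Kᗮ.smul_mem _ hu⟩

theorem vectorSpan_range_ne_top_of_finrank_eq [FiniteDimensional ℝ E] {d : ℕ}
    (hE : finrank ℝ E = d + 1) (w : Fin (d + 1) → E) : vectorSpan ℝ (range w) ≠ ⊤ := by
  intro htop
  have := finrank_vectorSpan_range_le ℝ w (Fintype.card_fin _)
  rw [htop, finrank_top, hE] at this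
  omega

end Width

section Volume

variable [FiniteDimensional ℝ E] [MeasurableSpace E] [BorelSpace E]

theorem OrthonormalBasis.volume_setOf_forall_inner_mem_Icc {ι : Type*} [Fintype ι]
    (b : OrthonormalBasis ι ℝ E) (a c : ι → ℝ) :
    volume {x : E | ∀ k, ⟪b k, x⟫ ∈ Icc (a k) (c k)} = ∏ k, ENNReal.ofReal (c k - a k) := by
  have hpres := (EuclideanSpace.volume_preserving_symm_measurableEquiv_toLp ι).comp
    b.measurePreserving_repr
  have hset : {x : E | ∀ k, ⟪b k, x⟫ ∈ Icc (a k) (c k)} =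
      ((MeasurableEquiv.toLp 2 (ι → ℝ)).symm ∘ b.repr) ⁻¹' Icc a c := by
    ext x
    simp [b.repr_apply_apply, Pi.le_def, forall_and]
  rw [hset, hpres.measure_preimage measurableSet_Icc.nullMeasurableSet, Real.volume_Icc_pi]

theorem volume_cthickening_convexHull_le {d : ℕ} (hE : finrank ℝ E = d + 1)
    {w : Fin (d + 1) → E} {μ δ : ℝ} (hδ : 0 ≤ δ) (hw : ∀ j k, ‖w j - w k‖ ≤ μ) :
    volume (cthickening δ (convexHull ℝ (range w))) ≤
      ENNReal.ofReal ((μ + 2 * δ) ^ d * (2 * δ)) := by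
  obtain ⟨b, hb⟩ :=
    exists_orthonormalBasis_zero_mem_orthogonal hE (vectorSpan_range_ne_top_of_finrank_eq hE w)
  let L : Fin (d + 1) → ℝ := Fin.cons 0 fun _ => μ
  have hL : ∀ k j j', ⟪b k, w j - w j'⟫ ≤ L k := by
    refine Fin.cases (fun j j' => ?_) (fun k j j' => ?_)
    · exact ((Submodule.mem_orthogonal' _ _).1 hb _
        (vsub_mem_vectorSpan ℝ (mem_range_self j) (mem_range_self j'))).le
    · calc ⟪b k.succ, w j - w j'⟫ ≤ ‖b k.succ‖ * ‖w j - w j'‖ := real_inner_le_norm _ _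
        _ ≤ L k.succ := by simpa [L, b.orthonormal.1] using hw j j'
  let m : Fin (d + 1) → ℝ := fun k => ⨅ j, ⟪b k, w j⟫
  calc volume (cthickening δ (convexHull ℝ (range w)))
      ≤ volume {x : E | ∀ k, ⟪b k, x⟫ ∈ Icc (m k - δ) (m k + L k + δ)} :=
        measure_mono fun x hx k => inner_mem_Icc_of_mem_cthickening
          ((finite_range w).isCompact_convexHull ℝ) (b.orthonormal.1 k).le hδ
          (fun z hz => inner_mem_Icc_of_mem_convexHull (hL k) hz) hx
    _ = ENNReal.ofReal ((μ + 2 * δ) ^ d * (2 * δ)) := by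
        simp_rw [b.volume_setOf_forall_inner_mem_Icc,
          show ∀ k, m k + L k + δ - (m k - δ) = L k + 2 * δ from fun k => by ring]
        simp only [Fin.prod_univ_succ, L, Fin.cons_zero, Fin.cons_succ, zero_add,
          Finset.prod_const, Finset.card_univ, Fintype.card_fin]
        have hμ : 0 ≤ μ := (norm_nonneg _).trans (hw 0 0)
        rw [← ENNReal.ofReal_pow (by linarith), ← ENNReal.ofReal_mul (by linarith), mul_comm]

end Volume

theorem add_two_mul_pow_mul_le {μ δ : ℝ} (hδ0 : 0 ≤ δ) (hδμ : δ ≤ μ) (d : ℕ) :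
    (μ + 2 * δ) ^ d * (2 * δ) ≤ 3 ^ (d + 1) * μ ^ d * δ := by
  have hμ : 0 ≤ μ := hδ0.trans hδμ
  calc (μ + 2 * δ) ^ d * (2 * δ) ≤ (3 * μ) ^ d * (3 * δ) := by gcongr <;> linarith
    _ = 3 ^ (d + 1) * μ ^ d * δ := by ring

theorem stmt19_general (n : ℕ) (μ δ : ℝ) (hμ : 0 < μ) (hδ0 : 0 ≤ δ) (hδμ : δ ≤ μ)
    (v v' : Fin (n + 1) → EuclideanSpace ℝ (Fin n))
    (hv : ∀ i j, ‖v i - v j‖ < μ)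
    (hind : AffineIndependent ℝ v)
    (hδ : ∀ i, ‖v i - v' i‖ ≤ δ) :
    (volume (symmDiff (convexHull ℝ (Set.range v')) (convexHull ℝ (Set.range v)))).toReal ≤
      3 ^ n * (n + 1) * μ ^ (n - 1) * δ := by
  cases n with
  | zero =>
    rw [Subsingleton.elim v' v, symmDiff_self]
    simpa using hδ0
  | succ d =>
    let b : AffineBasis (Fin (d + 1 + 1)) ℝ (EuclideanSpace ℝ (Fin (d + 1))) :=
      ⟨v, hind, hind.affineSpan_eq_top_iff_card_eq_finrank_add_one.2 (by simp)⟩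
    set C := (μ + 2 * δ) ^ d * (2 * δ)
    set N := fun i : Fin (d + 1 + 1) => cthickening δ (convexHull ℝ (range (v ∘ i.succAbove)))
    have hvol : volume (symmDiff (convexHull ℝ (range v')) (convexHull ℝ (range v))) ≤
        ENNReal.ofReal ((d + 2) * C) :=
      calc _ ≤ volume (⋃ i, N i) :=
            measure_mono (b.symmDiff_convexHull_subset_iUnion_cthickening v' hδ0 hδ)
        _ ≤ ∑ i, volume (N i) := measure_iUnion_fintype_le _ _
        _ ≤ ∑ _i : Fin (d + 1 + 1), ENNReal.ofReal C := Finset.sum_le_sum fun i _ =>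
            volume_cthickening_convexHull_le finrank_euclideanSpace_fin hδ0 fun j k => (hv _ _).le
        _ = ENNReal.ofReal ((d + 2) * C) := by
            rw [← ENNReal.ofReal_sum_of_nonneg fun _ _ => by positivity]
            simp [add_assoc, one_add_one_eq_two]
    refine (ENNReal.toReal_le_of_le_ofReal (by positivity) hvol).trans ?_
    calc (d + 2) * C ≤ (d + 2) * (3 ^ (d + 1) * μ ^ d * δ) :=
          mul_le_mul_of_nonneg_left (add_two_mul_pow_mul_le hδ0 hδμ d) (by positivity)
      _ = 3 ^ (d + 1) * ((d + 1 : ℕ) + 1) * μ ^ (d + 1 - 1) * δ := by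
        rw [Nat.add_sub_cancel]; push_cast; ring

theorem stmt19 (n : ℕ) (μ δ : ℝ) (hμ : 0 < μ) (hδ0 : 0 ≤ δ) (hδμ : δ ≤ μ)
    (v v' : Fin (n + 1) → EuclideanSpace ℝ (Fin n))
    (hv : ∀ i j, ‖v i - v j‖ < μ) (hv' : ∀ i j, ‖v' i - v' j‖ < μ)
    (hind : AffineIndependent ℝ v) (hind' : AffineIndependent ℝ v')
    (hδ : ∀ i, ‖v i - v' i‖ ≤ δ) :
    (volume (symmDiff (convexHull ℝ (Set.range v')) (convexHull ℝ (Set.range v)))).toReal ≤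
      3 ^ n * (n + 1) * μ ^ (n - 1) * δ :=
  stmt19_general n μ δ hμ hδ0 hδμ v v' hv hind hδ
end
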